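/- arXiv:1607.07023 — 4 statements merged into one kernel-verified Lean document; each statement's English description precedes it below -/
import Mathlib

section
/- In the group B = ⟨s, t, u | stus = tust = ustu⟩, the element (stu)^4 is central. -/
/-- In the group `⟨s, t, u | stus = tust = ustu⟩`, the element `(stu)^4` is central. -/
theorem stmt_7 {G : Type*} [Group G] (s t u : G)
    (h1 : s * t * u * s = t * u * s * t) (h2 : t * u * s * t = u * s * t * u) :
    Commute ((s * t * u) ^ 4) s ∧ Commute ((s * t * u) ^ 4) t ∧
      Commute ((s * t * u) ^ 4) u := by
  have h3 : s * t * u * s = u * s * t * u := h1.trans h2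
  have e1 : s * (t * (u * s)) = t * (u * (s * t)) := by simpa [mul_assoc] using h1
  have e2 : t * (u * (s * t)) = u * (s * (t * u)) := by simpa [mul_assoc] using h2
  have e3 : s * (t * (u * s)) = u * (s * (t * u)) := by simpa [mul_assoc] using h3
  have r1 : ∀ x : G, s * (t * (u * (s * x))) = t * (u * (s * (t * x))) := fun x => by
    simpa [mul_assoc] using congrArg (· * x) h1
  have r2 : ∀ x : G, t * (u * (s * (t * x))) = u * (s * (t * (u * x))) := fun x => by
    simpa [mul_assoc] using congrArg (· * x) h2
  have r3 : ∀ x : G, s * (t * (u * (s * x))) = u * (s * (t * (u * x))) := fun x => by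
    simpa [mul_assoc] using congrArg (· * x) h3
  have W1 : s * (t * (u * (s * (t * (u * (s * (t * (u * (s * (t * (u * (s)))))))))))) = s * (s * (t * (u * (s * (t * (u * (s * (t * (u * (s * (t * (u)))))))))))) := calc
    s * (t * (u * (s * (t * (u * (s * (t * (u * (s * (t * (u * (s)))))))))))) = s * (s * (t * (u * (s * (u * (s * (t * (u * (s * (t * (u * (s)))))))))))) := congrArg (fun y => s * y) ((r1 (u * (s * (t * (u * (s * (t * (u * (s))))))))).symm)
    _ = s * (s * (t * (u * (s * (t * (u * (s * (t * (s * (t * (u * (s)))))))))))) := congrArg (fun y => s * y) (congrArg (fun y => s * y) (congrArg (fun y => t * y) (congrArg (fun y => u * y) (congrArg (fun y => s * y) ((r2 (s * (t * (u * (s))))).symm)))))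
    _ = s * (s * (t * (u * (s * (t * (u * (s * (t * (u * (s * (t * (u)))))))))))) := congrArg (fun y => s * y) (congrArg (fun y => s * y) (congrArg (fun y => t * y) (congrArg (fun y => u * y) (congrArg (fun y => s * y) (congrArg (fun y => t * y) (congrArg (fun y => u * y) (congrArg (fun y => s * y) (congrArg (fun y => t * y) (e3)))))))))
  have W2 : s * (t * (u * (s * (t * (u * (s * (t * (u * (s * (t * (u * (t)))))))))))) = t * (s * (t * (u * (s * (t * (u * (s * (t * (u * (s * (t * (u)))))))))))) := calc
    s * (t * (u * (s * (t * (u * (s * (t * (u * (s * (t * (u * (t)))))))))))) = t * (u * (s * (t * (t * (u * (s * (t * (u * (s * (t * (u * (t)))))))))))) := r1 (t * (u * (s * (t * (u * (s * (t * (u * (t)))))))))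
    _ = t * (u * (s * (t * (u * (s * (t * (u * (u * (s * (t * (u * (t)))))))))))) := congrArg (fun y => t * y) (congrArg (fun y => u * y) (congrArg (fun y => s * y) (congrArg (fun y => t * y) (r2 (u * (s * (t * (u * (t)))))))))
    _ = t * (s * (t * (u * (s * (s * (t * (u * (u * (s * (t * (u * (t)))))))))))) := congrArg (fun y => t * y) ((r3 (s * (t * (u * (u * (s * (t * (u * (t))))))))).symm)
    _ = t * (s * (t * (u * (s * (s * (t * (u * (s * (t * (u * (s * (t)))))))))))) := congrArg (fun y => t * y) (congrArg (fun y => s * y) (congrArg (fun y => t * y) (congrArg (fun y => u * y) (congrArg (fun y => s * y) (congrArg (fun y => s * y) (congrArg (fun y => t * y) (congrArg (fun y => u * y) ((r3 (t)).symm))))))))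
    _ = t * (s * (t * (u * (s * (t * (u * (s * (t * (t * (u * (s * (t)))))))))))) := congrArg (fun y => t * y) (congrArg (fun y => s * y) (congrArg (fun y => t * y) (congrArg (fun y => u * y) (congrArg (fun y => s * y) (r1 (t * (u * (s * (t)))))))))
    _ = t * (s * (t * (u * (s * (t * (u * (s * (t * (u * (s * (t * (u)))))))))))) := congrArg (fun y => t * y) (congrArg (fun y => s * y) (congrArg (fun y => t * y) (congrArg (fun y => u * y) (congrArg (fun y => s * y) (congrArg (fun y => t * y) (congrArg (fun y => u * y) (congrArg (fun y => s * y) (congrArg (fun y => t * y) (e2)))))))))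
  have W3 : s * (t * (u * (s * (t * (u * (s * (t * (u * (s * (t * (u * (u)))))))))))) = u * (s * (t * (u * (s * (t * (u * (s * (t * (u * (s * (t * (u)))))))))))) := calc
    s * (t * (u * (s * (t * (u * (s * (t * (u * (s * (t * (u * (u)))))))))))) = s * (t * (u * (s * (s * (t * (u * (s * (u * (s * (t * (u * (u)))))))))))) := congrArg (fun y => s * y) (congrArg (fun y => t * y) (congrArg (fun y => u * y) (congrArg (fun y => s * y) ((r1 (u * (s * (t * (u * (u)))))).symm))))
    _ = s * (t * (u * (s * (s * (t * (u * (s * (t * (u * (s * (t * (u)))))))))))) := congrArg (fun y => s * y) (congrArg (fun y => t * y) (congrArg (fun y => u * y) (congrArg (fun y => s * y) (congrArg (fun y => s * y) (congrArg (fun y => t * y) (congrArg (fun y => u * y) (congrArg (fun y => s * y) ((r2 (u)).symm))))))))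
    _ = u * (s * (t * (u * (s * (t * (u * (s * (t * (u * (s * (t * (u)))))))))))) := r3 (s * (t * (u * (s * (t * (u * (s * (t * (u)))))))))
  refine ⟨?_, ?_, ?_⟩
  · show (s * t * u) ^ 4 * s = s * (s * t * u) ^ 4
    simpa [pow_succ, mul_assoc] using W1
  · show (s * t * u) ^ 4 * t = t * (s * t * u) ^ 4
    simpa [pow_succ, mul_assoc] using W2
  · show (s * t * u) ^ 4 * u = u * (s * t * u) ^ 4
    simpa [pow_succ, mul_assoc] using W3
end

section
/- In the group B = ⟨s, t, u | ustu = tust, stust = ustus⟩, the element z = (stu)^3 satisfies z = (tus)^3 = (ust)^3 and z is central in B. -/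
/-- In the group `⟨s, t, u | ustu = tust, stust = ustus⟩`, the element
`z = (stu)^3` satisfies `z = (tus)^3 = (ust)^3` and `z` is central. -/
theorem stmt_8 {G : Type*} [Group G] (s t u : G)
    (h1 : u * s * t * u = t * u * s * t)
    (h2 : s * t * u * s * t = u * s * t * u * s) :
    (s * t * u) ^ 3 = (t * u * s) ^ 3 ∧ (s * t * u) ^ 3 = (u * s * t) ^ 3 ∧
      Commute ((s * t * u) ^ 3) s ∧ Commute ((s * t * u) ^ 3) t ∧
      Commute ((s * t * u) ^ 3) u := by
  -- x = u * (s*t*u); key commutation s * x = x * s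
  have hc : Commute s (u * (s * (t * u))) := by
    show s * (u * (s * (t * u))) = (u * (s * (t * u))) * s
    have e1 := congrArg (s * ·) h1
    have e2 := h2
    simp only [mul_assoc] at e1 e2 ⊢
    rw [e1, e2]
  have ha2 : (s * t * u) * (s * t * u) = (u * (s * (t * u))) * (s * u) := by
    have e := congrArg (· * u) h2
    simp only [mul_assoc] at e ⊢
    exact e
  have ha3 : (s * t * u) ^ 3 = (u * (s * (t * u))) * (s * (u * (s * (t * u)))) := by
    rw [pow_succ, pow_two, ha2]
    group
  have hcs : Commute ((s * t * u) ^ 3) s := by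
    rw [ha3]
    exact Commute.mul_left hc.symm (Commute.mul_left (Commute.refl s) hc.symm)
  have hcx : Commute ((s * t * u) ^ 3) (u * (s * (t * u))) := by
    rw [ha3]
    exact Commute.mul_left (Commute.refl _)
      (Commute.mul_left hc (Commute.refl _))
  have hca : Commute ((s * t * u) ^ 3) (s * t * u) := (Commute.refl _).pow_left 3
  have hcu : Commute ((s * t * u) ^ 3) u := by
    have h := hcx.mul_right hca.inv_right
    rwa [show (u * (s * (t * u))) * (s * t * u)⁻¹ = u from by group] at h
  have hct : Commute ((s * t * u) ^ 3) t := by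
    have h := hcs.inv_right.mul_right (hca.mul_right hcu.inv_right)
    rwa [show s⁻¹ * ((s * t * u) * u⁻¹) = t from by group] at h
  refine ⟨?_, ?_, hcs, hct, hcu⟩
  · have e : (t * u * s) ^ 3 = s⁻¹ * (s * t * u) ^ 3 * s := by
      rw [show t * u * s = s⁻¹ * (s * t * u) * s⁻¹⁻¹ from by group, conj_pow, inv_inv]
    rw [e, mul_assoc s⁻¹ ((s * t * u) ^ 3) s, hcs.eq, ← mul_assoc, inv_mul_cancel, one_mul]
  · have e : (u * s * t) ^ 3 = u * (s * t * u) ^ 3 * u⁻¹ := by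
      rw [show u * s * t = u * (s * t * u) * u⁻¹ from by group, conj_pow]
    rw [e, ← hcu.eq, mul_assoc ((s * t * u) ^ 3) u u⁻¹, mul_inv_cancel, mul_one]
end

section
/- In the group B = ⟨s, t, u | stu = tus, ustut = stutu⟩, the element z = stutu satisfies z = ustut = tustu = tutus = utust and z is central in B. -/
/-- In the group `⟨s, t, u | stu = tus, ustut = stutu⟩`, the element `z = stutu`
satisfies `z = ustut = tustu = tutus = utust` and `z` is central. -/
theorem stmt_9 {G : Type*} [Group G] (s t u : G)
    (h1 : s * t * u = t * u * s)
    (h2 : u * s * t * u * t = s * t * u * t * u) :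
    s * t * u * t * u = u * s * t * u * t ∧
    s * t * u * t * u = t * u * s * t * u ∧
    s * t * u * t * u = t * u * t * u * s ∧
    s * t * u * t * u = u * t * u * s * t ∧
    Commute (s * t * u * t * u) s ∧
    Commute (s * t * u * t * u) t ∧
    Commute (s * t * u * t * u) u := by
  have h1' : s * (t * u) = t * (u * s) := by simpa [mul_assoc] using h1
  have ha : ∀ x : G, s * (t * (u * x)) = t * (u * (s * x)) := by
    intro x
    simpa [mul_assoc] using congrArg (· * x) h1
  have hb : ∀ x : G, u * (s * (t * (u * (t * x)))) = s * (t * (u * (t * (u * x)))) := by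
    intro x
    simpa [mul_assoc] using congrArg (· * x) h2
  have e1 : s * t * u * t * u = u * s * t * u * t := h2.symm
  have e2 : s * t * u * t * u = t * u * s * t * u := by rw [h1]
  have e3 : s * t * u * t * u = t * u * t * u * s := by
    simp only [mul_assoc]
    rw [ha, h1']
  -- z commutes with u : z * u = u * z
  have cu : (s * t * u * t * u) * u = u * (s * t * u * t * u) := by
    simp only [mul_assoc]
    rw [hb]
  -- z commutes with s
  have cs : (s * t * u * t * u) * s = s * (s * t * u * t * u) := by
    conv_lhs => rw [e3]
    simp only [mul_assoc, ha, h1']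
  -- z commutes with t
  have ct : (s * t * u * t * u) * t = t * (s * t * u * t * u) := by
    conv_lhs => rw [e2]
    conv_rhs => rw [e1]
    simp only [mul_assoc]
  -- e4 : z = u t u s t, from u * (tustu) * u⁻¹ and cu
  have e4 : s * t * u * t * u = u * t * u * s * t := by
    have : (s * t * u * t * u) * u = (u * t * u * s * t) * u := by
      rw [cu]
      conv_lhs => rw [e2]
      simp only [mul_assoc]
    exact mul_right_cancel this
  exact ⟨e1, e2, e3, e4, cs, ct, cu⟩
end

section
/- Let H = ⟨s, t | sts = tst, (s - u_1)(s - u_2)(s - u_3) = 0, (t - u_1)(t - u_2)(t - u_3) = 0⟩ be the generic Hecke algebra of type G_4 over R = ℤ[u_i^{±1}], let u₁ ⊆ H be the R-subalgebra generated by s, and let z = (st)^3. Then the R-submodule U = Σ_{k=0}^{1} (z^k u₁ + z^k u₁ t^{-1} u₁) equals H; in particular t ∈ z·u₁t^{-1}u₁ + Σ z^k u₁. -/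
set_option maxHeartbeats 4000000 in
/-- For the generic Hecke algebra `H` of type `G₄` (generated over `R` by `s, t`
with `sts = tst` and cubic relations with unit parameters `u₁, u₂, u₃`), with
`u₁ ⊆ H` the subalgebra generated by `s`, `z = (st)^3` and `t'` the inverse of
`t`, the `R`-submodule `U = Σ_{k=0}^{1} (z^k u₁ + z^k u₁ t⁻¹ u₁)` equals `H`;
in particular `t ∈ z·u₁t⁻¹u₁ + Σ_k z^k u₁`. -/
theorem stmt_13 {R H : Type*} [CommRing R] [Ring H] [Algebra R H]
    (u : Fin 3 → Rˣ) (s t t' : H)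
    (hgen : Algebra.adjoin R {s, t} = ⊤)
    (hbraid : s * t * s = t * s * t)
    (hs : (s - algebraMap R H (u 0)) * (s - algebraMap R H (u 1)) *
        (s - algebraMap R H (u 2)) = 0)
    (ht : (t - algebraMap R H (u 0)) * (t - algebraMap R H (u 1)) *
        (t - algebraMap R H (u 2)) = 0)
    (htt' : t * t' = 1) (ht't : t' * t = 1) :
    Submodule.span R {x : H | ∃ (k : Fin 2) (a b : Algebra.adjoin R {s}),
        x = ((s * t) ^ 3) ^ (k : ℕ) * (a : H) ∨
        x = ((s * t) ^ 3) ^ (k : ℕ) * (a : H) * t' * (b : H)} = ⊤ ∧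
    t ∈ Submodule.span R {x : H |
        (∃ a b : Algebra.adjoin R {s}, x = (s * t) ^ 3 * (a : H) * t' * (b : H)) ∨
        (∃ (k : Fin 2) (a : Algebra.adjoin R {s}),
          x = ((s * t) ^ 3) ^ (k : ℕ) * (a : H))} := by
  classical
  obtain ⟨e1, e2, e3, v, hv, hs3, ht3⟩ :
      ∃ e1 e2 e3 v : R, v * e3 = 1 ∧
        (s*(s*s) = e1 • (s*s) - e2 • s + e3 • (1:H)) ∧
        (t*(t*t) = e1 • (t*t) - e2 • t + e3 • (1:H)) := by
    refine ⟨(u 0 : R) + (u 1 : R) + (u 2 : R),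
      (u 0 : R) * (u 1 : R) + (u 0 : R) * (u 2 : R) + (u 1 : R) * (u 2 : R),
      (u 0 : R) * (u 1 : R) * (u 2 : R),
      ((u 0)⁻¹ : Rˣ) * ((u 1)⁻¹ : Rˣ) * ((u 2)⁻¹ : Rˣ), ?_, ?_, ?_⟩
    · have h : (((u 0)⁻¹ : Rˣ) : R) * (((u 1)⁻¹ : Rˣ) : R) * (((u 2)⁻¹ : Rˣ) : R) *
          ((u 0 : R) * (u 1 : R) * (u 2 : R))
          = ((((u 0)⁻¹ : Rˣ) : R) * (u 0 : R)) * ((((u 1)⁻¹ : Rˣ) : R) * (u 1 : R))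
          * ((((u 2)⁻¹ : Rˣ) : R) * (u 2 : R)) := by ring
      rw [h]
      simp [← Units.val_mul]
    · -- cubic for s
      have hx := hs
      have h0 : (algebraMap R H) ((u 0 : R)) = (u 0 : R) • (1:H) := Algebra.algebraMap_eq_smul_one _
      have h1 : (algebraMap R H) ((u 1 : R)) = (u 1 : R) • (1:H) := Algebra.algebraMap_eq_smul_one _
      have h2 : (algebraMap R H) ((u 2 : R)) = (u 2 : R) • (1:H) := Algebra.algebraMap_eq_smul_one _
      rw [h0, h1, h2] at hx
      have key : (s - (u 0 : R) • 1) * (s - (u 1 : R) • 1) * (s - (u 2 : R) • 1)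
          = s*(s*s) - (((u 0:R)+(u 1:R)+(u 2:R)) • (s*s)
            - ((u 0:R)*(u 1:R)+(u 0:R)*(u 2:R)+(u 1:R)*(u 2:R)) • s
            + ((u 0:R)*(u 1:R)*(u 2:R)) • (1:H)) := by
        simp only [sub_mul, mul_sub, smul_mul_assoc, mul_smul_comm, smul_smul, one_mul, mul_one,
          mul_assoc]
        module
      rw [key] at hx
      exact sub_eq_zero.mp hx
    · have hx := ht
      have h0 : (algebraMap R H) ((u 0 : R)) = (u 0 : R) • (1:H) := Algebra.algebraMap_eq_smul_one _
      have h1 : (algebraMap R H) ((u 1 : R)) = (u 1 : R) • (1:H) := Algebra.algebraMap_eq_smul_one _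
      have h2 : (algebraMap R H) ((u 2 : R)) = (u 2 : R) • (1:H) := Algebra.algebraMap_eq_smul_one _
      rw [h0, h1, h2] at hx
      have key : (t - (u 0 : R) • 1) * (t - (u 1 : R) • 1) * (t - (u 2 : R) • 1)
          = t*(t*t) - (((u 0:R)+(u 1:R)+(u 2:R)) • (t*t)
            - ((u 0:R)*(u 1:R)+(u 0:R)*(u 2:R)+(u 1:R)*(u 2:R)) • t
            + ((u 0:R)*(u 1:R)*(u 2:R)) • (1:H)) := by
        simp only [sub_mul, mul_sub, smul_mul_assoc, mul_smul_comm, smul_smul, one_mul, mul_one,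
          mul_assoc]
        module
      rw [key] at hx
      exact sub_eq_zero.mp hx
  have hsA : s ∈ Algebra.adjoin R {s} := Algebra.self_mem_adjoin_singleton R s
  -- inverse of s
  obtain ⟨s', hss', hs's, hs'A⟩ : ∃ w : H, s*w = 1 ∧ w*s = 1 ∧ w ∈ Algebra.adjoin R {s} := by
    refine ⟨v • (s*s) - (v*e1) • s + (v*e2) • (1:H), ?_, ?_, ?_⟩
    · rw [mul_add, mul_sub, mul_smul_comm, mul_smul_comm, mul_smul_comm, mul_one, hs3]
      have h : v • (e1 • (s*s) - e2 • s + e3 • (1:H)) - (v*e1) • (s*s) + (v*e2) • s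
          = (v*e3) • (1:H) := by module
      rw [h, hv, one_smul]
    · have hs3' : (s*s)*s = e1 • (s*s) - e2 • s + e3 • (1:H) := by rw [mul_assoc]; exact hs3
      rw [add_mul, sub_mul, smul_mul_assoc, smul_mul_assoc, smul_mul_assoc, one_mul, hs3']
      have h : v • (e1 • (s*s) - e2 • s + e3 • (1:H)) - (v*e1) • (s*s) + (v*e2) • s
          = (v*e3) • (1:H) := by module
      rw [h, hv, one_smul]
    · exact add_mem (sub_mem (Subalgebra.smul_mem _ (mul_mem hsA hsA) v)
        (Subalgebra.smul_mem _ hsA (v*e1))) (Subalgebra.smul_mem _ (one_mem _) (v*e2))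
  -- cancellation helpers
  have c1 : ∀ x : H, s*(s'*x) = x := fun x => by rw [← mul_assoc, hss', one_mul]
  have c2 : ∀ x : H, s'*(s*x) = x := fun x => by rw [← mul_assoc, hs's, one_mul]
  have c3 : ∀ x : H, t*(t'*x) = x := fun x => by rw [← mul_assoc, htt', one_mul]
  have c4 : ∀ x : H, t'*(t*x) = x := fun x => by rw [← mul_assoc, ht't, one_mul]
  have hb : ∀ x : H, s*(t*(s*x)) = t*(s*(t*x)) := fun x => by
    rw [← mul_assoc, ← mul_assoc, ← mul_assoc, ← mul_assoc, hbraid]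
  -- braid variants
  have ha : ∀ x : H, t'*(s*(t*x)) = s*(t*(s'*x)) := by
    intro x
    have h1 := hb (s'*x)
    rw [c1 x] at h1
    rw [h1, c4]
  have hbv : ∀ x : H, t*(s*(t'*x)) = s'*(t*(s*x)) := by
    intro x
    have h1 := hb (t'*x)
    rw [c3 x] at h1
    conv_rhs => rw [← h1]
    rw [c2]
  have hcv : ∀ x : H, t'*(s'*(t*x)) = s*(t'*(s'*x)) := by
    intro x
    have h1 := hbv (s'*x)
    rw [c1 x] at h1
    rw [← h1, c4]
  have he : ∀ x : H, s*(t*(s*(t'*x))) = t*(s*x) := by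
    intro x
    rw [hbv x, c1]
  -- z-word forms
  have hz6 : ∀ x : H, (s*t)^3 * x = s*(t*(s*(t*(s*(t*x))))) := by
    intro x
    rw [pow_succ, pow_succ, pow_one]
    simp only [mul_assoc]
  have hzA : ∀ x : H, (s*t)^3 * x = s*(t*(t*(s*(t*(t*x))))) := by
    intro x; rw [hz6, hb (t*x)]
  have hzA' : ∀ x : H, (s*t)^3 * x = t*(s*(t*(t*(s*(t*x))))) := by
    intro x; rw [hz6, hb (t*(s*(t*x)))]
  have hzB' : ∀ x : H, (s*t)^3 * x = s*(t*(s*(s*(t*(s*x))))) := by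
    intro x; rw [hz6, ← hb x]
  have hzB : ∀ x : H, (s*t)^3 * x = s*(s*(t*(s*(s*(t*x))))) := by
    intro x; rw [hz6, ← hb (s*(t*x))]
  have hzC : ∀ x : H, (s*t)^3 * x = t*(s*(t*(s*(t*(s*x))))) := by
    intro x; rw [hzB', hb (s*(t*(s*x)))]
  have hzD : ∀ x : H, (s*t)^3 * x = t*(s*(s*(t*(s*(s*x))))) := by
    intro x; rw [hzC, ← hb (s*x)]
  have hzAone : (s*t)^3 = s*(t*(t*(s*(t*t)))) := by
    have h := hzA 1; simp only [mul_one] at h; exact h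
  have hzA'one : (s*t)^3 = t*(s*(t*(t*(s*t)))) := by
    have h := hzA' 1; simp only [mul_one] at h; exact h
  have hzBone : (s*t)^3 = s*(s*(t*(s*(s*t)))) := by
    have h := hzB 1; simp only [mul_one] at h; exact h
  have hzB'one : (s*t)^3 = s*(t*(s*(s*(t*s)))) := by
    have h := hzB' 1; simp only [mul_one] at h; exact h
  have hzCone : (s*t)^3 = t*(s*(t*(s*(t*s)))) := by
    have h := hzC 1; simp only [mul_one] at h; exact h
  have hzDone : (s*t)^3 = t*(s*(s*(t*(s*s)))) := by
    have h := hzD 1; simp only [mul_one] at h; exact h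
  -- centrality of z
  have hzt : (s*t)^3 * t = t * ((s*t)^3) := by
    conv_lhs => rw [hzA'one]
    conv_rhs => rw [hzAone]
    simp only [mul_assoc]
  have hzs : (s*t)^3 * s = s * ((s*t)^3) := by
    conv_lhs => rw [hzB'one]
    conv_rhs => rw [hzDone]
    simp only [mul_assoc]
  have hzs' : (s*t)^3 * s' = s' * ((s*t)^3) := by
    conv_lhs => rw [← c2 ((s*t)^3 * s')]
    rw [← mul_assoc s, ← hzs, mul_assoc ((s*t)^3) s s', hss', mul_one]
  have hzt' : (s*t)^3 * t' = t' * ((s*t)^3) := by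
    conv_lhs => rw [← c4 ((s*t)^3 * t')]
    rw [← mul_assoc t, ← hzt, mul_assoc ((s*t)^3) t t', htt', mul_one]
  have hzsx : ∀ x : H, (s*t)^3 * (s*x) = s*((s*t)^3 * x) := fun x => by
    rw [← mul_assoc, hzs, mul_assoc]
  have hztx : ∀ x : H, (s*t)^3 * (t*x) = t*((s*t)^3 * x) := fun x => by
    rw [← mul_assoc, hzt, mul_assoc]
  have hzs'x : ∀ x : H, (s*t)^3 * (s'*x) = s'*((s*t)^3 * x) := fun x => by
    rw [← mul_assoc, hzs', mul_assoc]
  have hzt'x : ∀ x : H, (s*t)^3 * (t'*x) = t'*((s*t)^3 * x) := fun x => by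
    rw [← mul_assoc, hzt', mul_assoc]
  -- scalar-form identities with tails
  have hs3x : ∀ x : H, s*(s*(s*x)) = e1 • (s*(s*x)) - e2 • (s*x) + e3 • x := by
    intro x
    have h := congrArg (· * x) hs3
    simp only [sub_mul, add_mul, smul_mul_assoc, one_mul, mul_assoc] at h
    exact h
  have hs2 : s*s = e1 • s - e2 • (1:H) + e3 • s' := by
    have h := congrArg (· * s') hs3
    simp only [sub_mul, add_mul, smul_mul_assoc, one_mul, mul_assoc] at h
    simp only [hss', mul_one] at h
    exact h
  have hs2x : ∀ x : H, s*(s*x) = e1 • (s*x) - e2 • x + e3 • (s'*x) := by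
    intro x
    have h := congrArg (· * x) hs2
    simp only [sub_mul, add_mul, smul_mul_assoc, one_mul, mul_assoc] at h
    exact h
  have hs1 : s = e1 • (1:H) - e2 • s' + e3 • (s'*s') := by
    have h := congrArg (· * s') hs2
    simp only [sub_mul, add_mul, smul_mul_assoc, one_mul, mul_assoc] at h
    simp only [hss', mul_one] at h
    exact h
  have hs0 : (1:H) = e1 • s' - e2 • (s'*s') + e3 • (s'*(s'*s')) := by
    have h := congrArg (· * s') hs1
    simp only [sub_mul, add_mul, smul_mul_assoc, one_mul, mul_assoc] at h
    simp only [hss', mul_one, one_mul] at h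
    exact h
  have ht2 : t*t = e1 • t - e2 • (1:H) + e3 • t' := by
    have h := congrArg (· * t') ht3
    simp only [sub_mul, add_mul, smul_mul_assoc, one_mul, mul_assoc] at h
    simp only [htt', mul_one] at h
    exact h
  have ht2x : ∀ x : H, t*(t*x) = e1 • (t*x) - e2 • x + e3 • (t'*x) := by
    intro x
    have h := congrArg (· * x) ht2
    simp only [sub_mul, add_mul, smul_mul_assoc, one_mul, mul_assoc] at h
    exact h
  -- key identities
  have hK1 : ∀ x : H, (s*t)^3 * (s'*(t'*(s'*x))) = s*(t*(s*x)) := by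
    intro x
    rw [hzB' (s'*(t'*(s'*x))), c1 (t'*(s'*x)), c3 (s'*x), c1 x]
  have hK2 : ∀ x : H, t*x = (s*t)^3 * (s'*(s'*(t'*(s'*(s'*x))))) := by
    intro x
    rw [hzs'x (s'*(t'*(s'*(s'*x)))), hK1 (s'*x), c2, c1]
  have hK3 : ∀ x : H, t*(s*(s*x)) = (s*t)^3 * (s'*(s'*(t'*x))) := by
    intro x
    rw [hK2 (s*(s*x)), c2 (s*x), c2 x]
  have hK4 : ∀ x : H, s*(t*(s*(s*x))) = (s*t)^3 * (s'*(t'*x)) := by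
    intro x
    rw [← hK1 (s*x), c2]
  have hK5 : ∀ x : H, s*(s*(t*x)) = (s*t)^3 * (t'*(s'*(s'*x))) := by
    intro x
    rw [hK2 x, ← hzsx, ← hzsx, c1, c1]
  have hK8 : ∀ x : H, (s*t)^3 * (t'*x) = s*(t*(s*(t*(s*x)))) := by
    intro x
    rw [hz6 (t'*x), c3 x]
  have hK8one : (s*t)^3 * t' = s*(t*(s*(t*s))) := by
    have h := hK8 1; simp only [mul_one] at h; exact h
  -- commutation of z with the subalgebra generated by s
  have hcomm : ∀ c ∈ Algebra.adjoin R {s}, (s*t)^3 * c = c * (s*t)^3 := by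
    intro c hc
    induction hc using Algebra.adjoin_induction with
    | mem x hx =>
        rcases hx with rfl
        exact hzs
    | algebraMap r => exact (Algebra.commutes r _).symm
    | add x y _ _ hx hy => rw [mul_add, add_mul, hx, hy]
    | mul x y _ _ hx hy => rw [← mul_assoc, hx, mul_assoc, hy, ← mul_assoc]
  have hcommpow : ∀ (x : H), x ∈ Algebra.adjoin R {s} → ∀ n : ℕ,
      x * ((s*t)^3)^n = ((s*t)^3)^n * x := by
    intro x hx n
    exact ((Commute.pow_left (hcomm x hx) n).symm).eq
  set U : Submodule R H := Submodule.span R {x : H | ∃ (k : Fin 2) (a b : Algebra.adjoin R {s}),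
      x = ((s * t) ^ 3) ^ (k : ℕ) * (a : H) ∨
      x = ((s * t) ^ 3) ^ (k : ℕ) * (a : H) * t' * (b : H)} with hUdef
  have hU0p : ∀ x : H, x ∈ Algebra.adjoin R {s} → x ∈ U := by
    intro x hx
    apply Submodule.subset_span
    exact ⟨0, ⟨x, hx⟩, ⟨1, one_mem _⟩, Or.inl (by simp)⟩
  have hU1p : ∀ x : H, x ∈ Algebra.adjoin R {s} → (s*t)^3 * x ∈ U := by
    intro x hx
    apply Submodule.subset_span
    exact ⟨1, ⟨x, hx⟩, ⟨1, one_mem _⟩, Or.inl (by simp)⟩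
  have hU0'p : ∀ x y : H, x ∈ Algebra.adjoin R {s} → y ∈ Algebra.adjoin R {s} →
      x*(t'*y) ∈ U := by
    intro x y hx hy
    apply Submodule.subset_span
    exact ⟨0, ⟨x, hx⟩, ⟨y, hy⟩, Or.inr (by simp [mul_assoc])⟩
  have hU1'p : ∀ x y : H, x ∈ Algebra.adjoin R {s} → y ∈ Algebra.adjoin R {s} →
      (s*t)^3 * (x*(t'*y)) ∈ U := by
    intro x y hx hy
    apply Submodule.subset_span
    exact ⟨1, ⟨x, hx⟩, ⟨y, hy⟩, Or.inr (by simp [mul_assoc])⟩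
  -- U is stable under right multiplication by the subalgebra generated by s
  have hUrp : ∀ w ∈ U, ∀ x : H, x ∈ Algebra.adjoin R {s} → w*x ∈ U := by
    intro w hw x hx
    rw [hUdef] at hw
    induction hw using Submodule.span_induction with
    | mem y hy =>
        obtain ⟨k, a, b, hy | hy⟩ := hy
        · subst hy
          apply Submodule.subset_span
          exact ⟨k, a * ⟨x, hx⟩, ⟨1, one_mem _⟩, Or.inl (by simp [mul_assoc])⟩
        · subst hy
          apply Submodule.subset_span
          exact ⟨k, a, b * ⟨x, hx⟩, Or.inr (by simp [mul_assoc])⟩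
    | zero => rw [zero_mul]; exact zero_mem _
    | add y z _ _ hy hz => rw [add_mul]; exact add_mem hy hz
    | smul r y _ hy => rw [smul_mul_assoc]; exact Submodule.smul_mem _ _ hy
  -- U is stable under left multiplication by the subalgebra generated by s
  have hUlp : ∀ x : H, x ∈ Algebra.adjoin R {s} → ∀ w ∈ U, x*w ∈ U := by
    intro x hx w hw
    rw [hUdef] at hw
    induction hw using Submodule.span_induction with
    | mem y hy =>
        obtain ⟨k, a, b, hy | hy⟩ := hy
        · subst hy
          apply Submodule.subset_span
          refine ⟨k, ⟨x, hx⟩ * a, ⟨1, one_mem _⟩, Or.inl ?_⟩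
          push_cast
          rw [← mul_assoc, hcommpow x hx, mul_assoc]
        · subst hy
          apply Submodule.subset_span
          refine ⟨k, ⟨x, hx⟩ * a, b, Or.inr ?_⟩
          push_cast
          rw [← mul_assoc, ← mul_assoc, ← mul_assoc, hcommpow x hx, mul_assoc _ x _]
    | zero => rw [mul_zero]; exact zero_mem _
    | add y z _ _ hy hz => rw [mul_add]; exact add_mem hy hz
    | smul r y _ hy => rw [mul_smul_comm]; exact Submodule.smul_mem _ _ hy
  -- A t A is inside U
  have hUtp : ∀ x y : H, x ∈ Algebra.adjoin R {s} → y ∈ Algebra.adjoin R {s} →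
      x*(t*y) ∈ U := by
    intro x y hx hy
    rw [hK2 y, ← mul_assoc, ← hcomm x hx, mul_assoc]
    have hx' : x*(s'*s') ∈ Algebra.adjoin R {s} := mul_mem hx (mul_mem hs'A hs'A)
    have hy' : s'*(s'*y) ∈ Algebra.adjoin R {s} := mul_mem hs'A (mul_mem hs'A hy)
    have heq : x*(s'*(s'*(t'*(s'*(s'*y))))) = (x*(s'*s'))*(t'*(s'*(s'*y))) := by
      simp [mul_assoc]
    rw [heq]
    exact hU1'p _ _ hx' hy'
  -- convenient membership appliers
  have hUwz0 : ∀ x : H, x ∈ Algebra.adjoin R {s} → ∀ w : H, w = (s*t)^3 * x → w ∈ U :=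
    fun x hx w hw => hw ▸ hU1p x hx
  have hUwt : ∀ x y : H, x ∈ Algebra.adjoin R {s} → y ∈ Algebra.adjoin R {s} →
      ∀ w : H, w = x*(t*y) → w ∈ U := fun x y hx hy w hw => hw ▸ hUtp x y hx hy
  have hUwt' : ∀ x y : H, x ∈ Algebra.adjoin R {s} → y ∈ Algebra.adjoin R {s} →
      ∀ w : H, w = x*(t'*y) → w ∈ U := fun x y hx hy w hw => hw ▸ hU0'p x y hx hy
  have hUwzt' : ∀ x y : H, x ∈ Algebra.adjoin R {s} → y ∈ Algebra.adjoin R {s} →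
      ∀ w : H, w = (s*t)^3*(x*(t'*y)) → w ∈ U := fun x y hx hy w hw => hw ▸ hU1'p x y hx hy
  have h1A : (1:H) ∈ Algebra.adjoin R {s} := one_mem _
  have hU1t' : ∀ x : H, x ∈ Algebra.adjoin R {s} → (s*t)^3*(x*t') ∈ U := by
    intro x hx
    have h := hU1'p x 1 hx h1A
    rw [mul_one] at h
    exact h
  have hU0t' : ∀ x : H, x ∈ Algebra.adjoin R {s} → x*t' ∈ U := by
    intro x hx
    have h := hU0'p x 1 hx h1A
    rw [mul_one] at h
    exact h
  have hUt1 : ∀ y : H, y ∈ Algebra.adjoin R {s} → t*y ∈ U := by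
    intro y hy
    have h := hUtp 1 y h1A hy
    rwa [one_mul] at h
  have hUt'1 : ∀ y : H, y ∈ Algebra.adjoin R {s} → t'*y ∈ U := by
    intro y hy
    have h := hU0'p 1 y h1A hy
    rwa [one_mul] at h
  have hUt : t ∈ U := by have h := hUt1 1 h1A; rwa [mul_one] at h
  have hUt' : t' ∈ U := by have h := hUt'1 1 h1A; rwa [mul_one] at h
  have h1U : (1:H) ∈ U := hU0p 1 h1A
  have hbr : t*(s*t) = s*(t*s) := by
    rw [← mul_assoc, ← mul_assoc]; exact hbraid.symm
  have hK4one : s*(t*(s*s)) = (s*t)^3*(s'*t') := by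
    have h := hK4 1; simp only [mul_one] at h; exact h
  have hK5one : s*(s*t) = (s*t)^3*(t'*(s'*s')) := by
    have h := hK5 1; simp only [mul_one] at h; exact h
  -- ===== Computation (A) =====
  have hYw : (s*t)^3*((s*t)^3*t') = t*(s*(s*(t*(s*(s*(s*(t*(s*(t*s))))))))) := by
    conv_lhs => rw [hK8one]
    rw [hzD]
  have hexp : t*(s*(s*(t*(s*(s*(s*(t*(s*(t*s)))))))))
      = e1 • (t*(s*(s*(t*(s*(s*(t*(s*(t*s))))))))) - e2 • (t*(s*(s*(t*(s*(t*(s*(t*s))))))))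
        + e3 • (t*(s*(s*(t*(t*(s*(t*s))))))) := by
    rw [hs3x (t*(s*(t*s)))]
    simp only [mul_sub, mul_add, mul_smul_comm]
  have hW1 : t*(s*(s*(t*(s*(s*(t*(s*(t*s)))))))) = s'*((s*t)^3*((s*t)^3*t')) := by
    rw [← hzD (t*(s*(t*s))), ← hb s, hK4one, hzs'x t', hzs'x ((s*t)^3*t')]
  have hW2 : t*(s*(s*(t*(s*(t*(s*(t*s))))))) = s'*(s'*((s*t)^3*((s*t)^3*t'))) := by
    rw [← hzCone, hK3 ((s*t)^3), ← hzt', hzs'x (s'*((s*t)^3*t')), hzs'x ((s*t)^3*t')]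
  have hW3 : t*(s*(s*(t*(t*(s*(t*s))))))
      = e1 • (t*(s*(s*(t*(s*(t*s)))))) - e2 • (t*(s*(s*(s*(t*s)))))
        + e3 • (t*(s*(s*(t'*(s*(t*s)))))) := by
    rw [ht2x (s*(t*s))]
    simp only [mul_sub, mul_add, mul_smul_comm]
  have hW3a : t*(s*(s*(t*(s*(t*s)))))
      = s'*(s'*(s'*((s*t)^3*((s*t)^3*(t'*s'))))) := by
    rw [hK3 (t*(s*(t*s))), c4 (s*(t*s)), c2 (t*s), hK2 s, hs's, mul_one,
      hzs'x (s'*(t'*s')), hzs'x (t'*s'),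
      hzs'x (s'*(s'*((s*t)^3*(t'*s')))), hzs'x (s'*((s*t)^3*(t'*s'))), hzs'x ((s*t)^3*(t'*s'))]
  have hW3bU : t*(s*(s*(s*(t*s)))) ∈ U := by
    have h : t*(s*(s*(s*(t*s))))
        = e1 • (t*(s*(s*(t*s)))) - e2 • (t*(s*(t*s))) + e3 • (t*(t*s)) := by
      rw [hs3x (t*s)]
      simp only [mul_sub, mul_add, mul_smul_comm]
    rw [h]
    refine add_mem (sub_mem (Submodule.smul_mem _ _ ?_) (Submodule.smul_mem _ _ ?_))
      (Submodule.smul_mem _ _ ?_)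
    · exact hUwz0 s' hs'A _ (by rw [hK3 (t*s), c4 s, hs's, mul_one])
    · exact hUwzt' s' 1 hs'A h1A _ (by rw [← hb s, hK4one, mul_one])
    · rw [ht2x s]
      exact add_mem (sub_mem (Submodule.smul_mem _ _ (hUt1 s hsA))
        (Submodule.smul_mem _ _ (hU0p s hsA))) (Submodule.smul_mem _ _ (hUt'1 s hsA))
  have hW3cU : t*(s*(s*(t'*(s*(t*s))))) ∈ U := by
    rw [ha s, hs's, mul_one]
    have h : t*(s*(s*(s*t)))
        = e1 • (t*(s*(s*t))) - e2 • (t*(s*t)) + e3 • (t*t) := by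
      rw [hs3x t]
      simp only [mul_sub, mul_add, mul_smul_comm]
    rw [h]
    refine add_mem (sub_mem (Submodule.smul_mem _ _ ?_) (Submodule.smul_mem _ _ ?_))
      (Submodule.smul_mem _ _ ?_)
    · exact hUwz0 (s'*s') (mul_mem hs'A hs'A) _ (by rw [hK3 t, ht't, mul_one])
    · exact hUwt s s hsA hsA _ hbr
    · rw [ht2]
      exact add_mem (sub_mem (Submodule.smul_mem _ _ hUt) (Submodule.smul_mem _ _ h1U))
        (Submodule.smul_mem _ _ hUt')
  have hEq1 : (s*t)^3*((s*t)^3*t')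
      = e1 • (s'*((s*t)^3*((s*t)^3*t'))) - e2 • (s'*(s'*((s*t)^3*((s*t)^3*t'))))
        + e3 • (e1 • (s'*(s'*(s'*((s*t)^3*((s*t)^3*(t'*s'))))))
          - e2 • (t*(s*(s*(s*(t*s))))) + e3 • (t*(s*(s*(t'*(s*(t*s))))))) := by
    conv_lhs => rw [hYw, hexp, hW1, hW2, hW3, hW3a]
  have hEU : (s*t)^3*((s*t)^3*t') - e1 • (s'*((s*t)^3*((s*t)^3*t')))
      + e2 • (s'*(s'*((s*t)^3*((s*t)^3*t'))))
      - (e3*e1) • (s'*(s'*(s'*((s*t)^3*((s*t)^3*(t'*s')))))) ∈ U := by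
    have hid : (s*t)^3*((s*t)^3*t') - e1 • (s'*((s*t)^3*((s*t)^3*t')))
        + e2 • (s'*(s'*((s*t)^3*((s*t)^3*t'))))
        - (e3*e1) • (s'*(s'*(s'*((s*t)^3*((s*t)^3*(t'*s'))))))
        = (-(e3*e2)) • (t*(s*(s*(s*(t*s))))) + (e3*e3) • (t*(s*(s*(t'*(s*(t*s)))))) := by
      nth_rewrite 1 [hEq1]
      module
    rw [hid]
    exact add_mem (Submodule.smul_mem _ _ hW3bU) (Submodule.smul_mem _ _ hW3cU)
  have h1Y : (s*t)^3*((s*t)^3*t')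
      = e1 • (s'*((s*t)^3*((s*t)^3*t'))) - e2 • (s'*(s'*((s*t)^3*((s*t)^3*t'))))
        + e3 • (s'*(s'*(s'*((s*t)^3*((s*t)^3*t'))))) := by
    have h := congrArg (· * ((s*t)^3*((s*t)^3*t'))) hs0
    simp only [sub_mul, add_mul, smul_mul_assoc, one_mul, mul_assoc] at h
    exact h
  have hFA : (s*t)^3*((s*t)^3*t') - e1 • ((s*t)^3*((s*t)^3*(t'*s'))) ∈ U := by
    have hEU2 : e3 • (s'*(s'*(s'*((s*t)^3*((s*t)^3*t') - e1 • ((s*t)^3*((s*t)^3*(t'*s'))))))) ∈ U := by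
      have hid : e3 • (s'*(s'*(s'*((s*t)^3*((s*t)^3*t') - e1 • ((s*t)^3*((s*t)^3*(t'*s')))))))
          = ((s*t)^3*((s*t)^3*t') - e1 • (s'*((s*t)^3*((s*t)^3*t')))
            + e2 • (s'*(s'*((s*t)^3*((s*t)^3*t'))))
            - (e3*e1) • (s'*(s'*(s'*((s*t)^3*((s*t)^3*(t'*s')))))))
          - ((s*t)^3*((s*t)^3*t') - (e1 • (s'*((s*t)^3*((s*t)^3*t')))
            - e2 • (s'*(s'*((s*t)^3*((s*t)^3*t'))))
            + e3 • (s'*(s'*(s'*((s*t)^3*((s*t)^3*t'))))))) := by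
        simp only [mul_sub, mul_smul_comm, smul_sub, smul_smul]
        module
      rw [hid]
      refine sub_mem hEU ?_
      rw [← h1Y, sub_self]
      exact zero_mem _
    have h2 := Submodule.smul_mem U v hEU2
    rw [smul_smul, hv, one_smul] at h2
    have h3 := hUlp s hsA _ h2; rw [c1] at h3
    have h4 := hUlp s hsA _ h3; rw [c1] at h4
    have h5 := hUlp s hsA _ h4; rw [c1] at h5
    exact h5
  -- ===== Computation (B) =====
  have hzU : (s*t)^3 ∈ U := by have h := hU1p 1 h1A; rwa [mul_one] at h
  have haone : t'*(s*t) = s*(t*s') := by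
    have h := ha 1; simp only [mul_one] at h; exact h
  have hcvone : t'*(s'*t) = s*(t'*s') := by
    have h := hcv 1; simp only [mul_one] at h; exact h
  have hYw2 : (s*t)^3*((s*t)^3*t') = s*(t*(s*(t*(s*(s*(s*(t*(s*(s*t))))))))) := by
    conv_lhs => rw [hK8one]
    rw [hzsx, hztx, hzsx, hztx, hzs, hzBone]
  have hV2 : s*(t*(s*(t*(s*(t*(s*(s*t))))))) = (s*t)^3*((s*t)^3*(t'*(s'*s'))) := by
    rw [← hz6 (s*(s*t)), hK5one]
  have hV1dec : s*(t*(s*(t*(s*(s*(t*(s*(s*t))))))))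
      = e1 • ((s*t)^3*((s*t)^3*(t'*(s'*s')))) - e2 • (s*(s*(t*(s*(t*(s*(s*t)))))))
        + e3 • (s*(s*(t*(t*(s*(s*t)))))) := by
    conv_lhs => rw [← hb (s*(s*(t*(s*(s*t))))), hs3x (t*(s*(s*t)))]
    simp only [mul_sub, mul_add, mul_smul_comm]
    rw [← hzB (s*(s*t)), hK5one]
  have hV1BU : s*(s*(t*(s*(t*(s*(s*t)))))) ∈ U := by
    rw [← hb (s*(s*t))]
    have h : s*(s*(s*(t*(s*(s*(s*t))))))
        = e1 • (s*(s*(s*(t*(s*(s*t)))))) - e2 • (s*(s*(s*(t*(s*t))))) + e3 • (s*(s*(s*(t*t)))) := by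
      rw [hs3x t]
      simp only [mul_sub, mul_add, mul_smul_comm]
    rw [h]
    refine add_mem (sub_mem (Submodule.smul_mem _ _ ?_) (Submodule.smul_mem _ _ ?_))
      (Submodule.smul_mem _ _ ?_)
    · -- q1 = s^3 t s^2 t
      have h2 : s*(s*(s*(t*(s*(s*t)))))
          = e1 • (s*(s*(t*(s*(s*t))))) - e2 • (s*(t*(s*(s*t)))) + e3 • (t*(s*(s*t))) := by
        rw [hs3x (t*(s*(s*t)))]
      rw [h2]
      refine add_mem (sub_mem (Submodule.smul_mem _ _ ?_) (Submodule.smul_mem _ _ ?_))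
        (Submodule.smul_mem _ _ ?_)
      · have h3 : s*(s*(t*(s*(s*t)))) = (s*t)^3 := hzBone.symm
        rw [h3]; exact hzU
      · exact hUwz0 s' hs'A _ (by rw [hK4 t, ht't, mul_one])
      · exact hUwz0 (s'*s') (mul_mem hs'A hs'A) _ (by rw [hK3 t, ht't, mul_one])
    · -- q2 = s^3 t s t
      rw [hbr]
      have h2 : s*(s*(s*(s*(t*s))))
          = e1 • (s*(s*(s*(t*s)))) - e2 • (s*(s*(t*s))) + e3 • (s*(t*s)) := by
        rw [hs3x (s*(t*s))]
      rw [h2]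
      refine add_mem (sub_mem (Submodule.smul_mem _ _ ?_) (Submodule.smul_mem _ _ ?_))
        (Submodule.smul_mem _ _ ?_)
      · have h3 : s*(s*(s*(t*s)))
            = e1 • (s*(s*(t*s))) - e2 • (s*(t*s)) + e3 • (t*s) := by
          rw [hs3x (t*s)]
        rw [h3]
        exact add_mem (sub_mem (Submodule.smul_mem _ _
            (hUwt (s*s) s (mul_mem hsA hsA) hsA _ (by simp only [mul_assoc])))
          (Submodule.smul_mem _ _ (hUwt s s hsA hsA _ rfl)))
          (Submodule.smul_mem _ _ (hUt1 s hsA))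
      · exact hUwt (s*s) s (mul_mem hsA hsA) hsA _ (by simp only [mul_assoc])
      · exact hUwt s s hsA hsA _ rfl
    · -- q3 = s^3 t^2
      rw [ht2]
      simp only [mul_sub, mul_add, mul_smul_comm, mul_one]
      refine add_mem (sub_mem (Submodule.smul_mem _ _ ?_) (Submodule.smul_mem _ _ ?_))
        (Submodule.smul_mem _ _ ?_)
      · exact hUwt (s*(s*s)) 1 (mul_mem hsA (mul_mem hsA hsA)) h1A _
          (by simp only [mul_one, mul_assoc])
      · exact hU0p _ (mul_mem hsA (mul_mem hsA hsA))
      · exact hUwt' (s*(s*s)) 1 (mul_mem hsA (mul_mem hsA hsA)) h1A _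
          (by simp only [mul_one, mul_assoc])
  have hV1CU : s*(s*(t*(t*(s*(s*t))))) ∈ U := by
    rw [ht2x (s*(s*t))]
    simp only [mul_sub, mul_add, mul_smul_comm]
    refine add_mem (sub_mem (Submodule.smul_mem _ _ ?_) (Submodule.smul_mem _ _ ?_))
      (Submodule.smul_mem _ _ ?_)
    · have h3 : s*(s*(t*(s*(s*t)))) = (s*t)^3 := hzBone.symm
      rw [h3]; exact hzU
    · exact hUwt (s*(s*(s*s))) 1 (mul_mem hsA (mul_mem hsA (mul_mem hsA hsA))) h1A _
        (by simp only [mul_one, mul_assoc])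
    · -- s^2 t' s^2 t
      rw [hs2x t]
      simp only [mul_sub, mul_add, mul_smul_comm]
      refine add_mem (sub_mem (Submodule.smul_mem _ _ ?_) (Submodule.smul_mem _ _ ?_))
        (Submodule.smul_mem _ _ ?_)
      · rw [haone]
        have h3 : s*(s*(s*(t*s')))
            = e1 • (s*(s*(t*s'))) - e2 • (s*(t*s')) + e3 • (t*s') := by
          rw [hs3x (t*s')]
        rw [h3]
        exact add_mem (sub_mem (Submodule.smul_mem _ _
            (hUwt (s*s) s' (mul_mem hsA hsA) hs'A _ (by simp only [mul_assoc])))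
          (Submodule.smul_mem _ _ (hUwt s s' hsA hs'A _ rfl)))
          (Submodule.smul_mem _ _ (hUt1 s' hs'A))
      · rw [ht't, mul_one]
        exact hU0p _ (mul_mem hsA hsA)
      · rw [hcvone]
        exact hUwt' (s*(s*s)) s' (mul_mem hsA (mul_mem hsA hsA)) hs'A _
          (by simp only [mul_assoc])
  have hV3U : s*(t*(s*(t*(t*(s*(s*t)))))) ∈ U := by
    rw [ht2x (s*(s*t))]
    simp only [mul_sub, mul_add, mul_smul_comm]
    refine add_mem (sub_mem (Submodule.smul_mem _ _ ?_) (Submodule.smul_mem _ _ ?_))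
      (Submodule.smul_mem _ _ ?_)
    · -- m1 = ststs^2t
      rw [← hb (s*(s*t))]
      have h3 : s*(s*(t*(s*(s*(s*t)))))
          = e1 • (s*(s*(t*(s*(s*t))))) - e2 • (s*(s*(t*(s*t)))) + e3 • (s*(s*(t*t))) := by
        rw [hs3x t]
        simp only [mul_sub, mul_add, mul_smul_comm]
      rw [h3]
      refine add_mem (sub_mem (Submodule.smul_mem _ _ ?_) (Submodule.smul_mem _ _ ?_))
        (Submodule.smul_mem _ _ ?_)
      · have h4 : s*(s*(t*(s*(s*t)))) = (s*t)^3 := hzBone.symm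
        rw [h4]; exact hzU
      · rw [hbr]
        have h4 : s*(s*(s*(t*s)))
            = e1 • (s*(s*(t*s))) - e2 • (s*(t*s)) + e3 • (t*s) := by
          rw [hs3x (t*s)]
        rw [h4]
        exact add_mem (sub_mem (Submodule.smul_mem _ _
            (hUwt (s*s) s (mul_mem hsA hsA) hsA _ (by simp only [mul_assoc])))
          (Submodule.smul_mem _ _ (hUwt s s hsA hsA _ rfl)))
          (Submodule.smul_mem _ _ (hUt1 s hsA))
      · rw [ht2]
        simp only [mul_sub, mul_add, mul_smul_comm, mul_one]
        exact add_mem (sub_mem (Submodule.smul_mem _ _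
            (hUwt (s*s) 1 (mul_mem hsA hsA) h1A _ (by simp only [mul_one, mul_assoc])))
          (Submodule.smul_mem _ _ (hU0p _ (mul_mem hsA hsA))))
          (Submodule.smul_mem _ _ (hUwt' (s*s) 1 (mul_mem hsA hsA) h1A _
            (by simp only [mul_one, mul_assoc])))
    · -- m2 = sts^3t
      have h3 : s*(t*(s*(s*(s*t))))
          = s*(t*(e1 • (s*(s*t)) - e2 • (s*t) + e3 • t)) := by rw [hs3x t]
      rw [h3]
      simp only [mul_sub, mul_add, mul_smul_comm]
      refine add_mem (sub_mem (Submodule.smul_mem _ _ ?_) (Submodule.smul_mem _ _ ?_))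
        (Submodule.smul_mem _ _ ?_)
      · exact hUwz0 s' hs'A _ (by rw [hK4 t, ht't, mul_one])
      · rw [hbr]
        exact hUwt (s*s) s (mul_mem hsA hsA) hsA _ (by simp only [mul_assoc])
      · rw [ht2]
        simp only [mul_sub, mul_add, mul_smul_comm, mul_one]
        exact add_mem (sub_mem (Submodule.smul_mem _ _
            (hUwt s 1 hsA h1A _ (by simp only [mul_one])))
          (Submodule.smul_mem _ _ (hU0p s hsA)))
          (Submodule.smul_mem _ _ (hU0t' s hsA))
    · -- m3 = stst's^2t
      rw [he (s*(s*t))]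
      have h3 : t*(s*(s*(s*t)))
          = t*(e1 • (s*(s*t)) - e2 • (s*t) + e3 • t) := by rw [hs3x t]
      rw [h3]
      simp only [mul_sub, mul_add, mul_smul_comm]
      refine add_mem (sub_mem (Submodule.smul_mem _ _ ?_) (Submodule.smul_mem _ _ ?_))
        (Submodule.smul_mem _ _ ?_)
      · exact hUwz0 (s'*s') (mul_mem hs'A hs'A) _ (by rw [hK3 t, ht't, mul_one])
      · rw [hbr]
        exact hUwt s s hsA hsA _ rfl
      · rw [ht2]
        exact add_mem (sub_mem (Submodule.smul_mem _ _ hUt) (Submodule.smul_mem _ _ h1U))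
          (Submodule.smul_mem _ _ hUt')
  have hEqB : (s*t)^3*((s*t)^3*t')
      = e1 • (s*(t*(s*(t*(s*(s*(t*(s*(s*t))))))))) - e2 • ((s*t)^3*((s*t)^3*(t'*(s'*s'))))
        + e3 • (s*(t*(s*(t*(t*(s*(s*t))))))) := by
    conv_lhs => rw [hYw2, hs3x (t*(s*(s*t)))]
    simp only [mul_sub, mul_add, mul_smul_comm]
    rw [hV2]
  have hFB : (s*t)^3*((s*t)^3*t') - (e1*e1 - e2) • ((s*t)^3*((s*t)^3*(t'*(s'*s')))) ∈ U := by
    have hV1U' : s*(t*(s*(t*(s*(s*(t*(s*(s*t))))))))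
        - e1 • ((s*t)^3*((s*t)^3*(t'*(s'*s')))) ∈ U := by
      have hid : s*(t*(s*(t*(s*(s*(t*(s*(s*t))))))))
          - e1 • ((s*t)^3*((s*t)^3*(t'*(s'*s'))))
          = (-e2) • (s*(s*(t*(s*(t*(s*(s*t))))))) + e3 • (s*(s*(t*(t*(s*(s*t)))))) := by
        nth_rewrite 1 [hV1dec]
        module
      rw [hid]
      exact add_mem (Submodule.smul_mem _ _ hV1BU) (Submodule.smul_mem _ _ hV1CU)
    have hid2 : (s*t)^3*((s*t)^3*t') - (e1*e1 - e2) • ((s*t)^3*((s*t)^3*(t'*(s'*s'))))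
        = e1 • (s*(t*(s*(t*(s*(s*(t*(s*(s*t)))))))) - e1 • ((s*t)^3*((s*t)^3*(t'*(s'*s')))))
          + e3 • (s*(t*(s*(t*(t*(s*(s*t)))))))
          + ((s*t)^3*((s*t)^3*t')
            - (e1 • (s*(t*(s*(t*(s*(s*(t*(s*(s*t)))))))))
              - e2 • ((s*t)^3*((s*t)^3*(t'*(s'*s'))))
              + e3 • (s*(t*(s*(t*(t*(s*(s*t))))))))) := by
      module
    rw [hid2]
    refine add_mem (add_mem (Submodule.smul_mem _ _ hV1U') (Submodule.smul_mem _ _ hV3U)) ?_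
    rw [← hEqB, sub_self]
    exact zero_mem _
  -- ===== combining (A) and (B) =====
  have hAr2 : (s*t)^3*((s*t)^3*(t'*s')) - e1 • ((s*t)^3*((s*t)^3*(t'*(s'*s')))) ∈ U := by
    have h := hUrp _ hFA s' hs'A
    have hid : (((s*t)^3*((s*t)^3*t')) - e1 • ((s*t)^3*((s*t)^3*(t'*s'))))*s'
        = ((s*t)^3*((s*t)^3*(t'*s'))) - e1 • ((s*t)^3*((s*t)^3*(t'*(s'*s')))) := by
      simp only [sub_mul, smul_mul_assoc, mul_assoc]
    rwa [hid] at h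
  have hAr3 : (s*t)^3*((s*t)^3*t') - (e1*e1) • ((s*t)^3*((s*t)^3*(t'*(s'*s')))) ∈ U := by
    have hid : (s*t)^3*((s*t)^3*t') - (e1*e1) • ((s*t)^3*((s*t)^3*(t'*(s'*s'))))
        = ((s*t)^3*((s*t)^3*t') - e1 • ((s*t)^3*((s*t)^3*(t'*s'))))
          + e1 • ((s*t)^3*((s*t)^3*(t'*s')) - e1 • ((s*t)^3*((s*t)^3*(t'*(s'*s'))))) := by
      module
    rw [hid]
    exact add_mem hFA (Submodule.smul_mem _ _ hAr2)
  have hc1m : e2 • ((s*t)^3*((s*t)^3*(t'*(s'*s')))) ∈ U := by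
    have hid : e2 • ((s*t)^3*((s*t)^3*(t'*(s'*s'))))
        = ((s*t)^3*((s*t)^3*t') - (e1*e1 - e2) • ((s*t)^3*((s*t)^3*(t'*(s'*s')))))
          - ((s*t)^3*((s*t)^3*t') - (e1*e1) • ((s*t)^3*((s*t)^3*(t'*(s'*s'))))) := by
      module
    rw [hid]
    exact sub_mem hFB hAr3
  have hc2m : e2 • ((s*t)^3*((s*t)^3*t')) ∈ U := by
    have hid : e2 • ((s*t)^3*((s*t)^3*t'))
        = e2 • ((s*t)^3*((s*t)^3*t') - (e1*e1) • ((s*t)^3*((s*t)^3*(t'*(s'*s')))))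
          + (e1*e1) • (e2 • ((s*t)^3*((s*t)^3*(t'*(s'*s'))))) := by
      module
    rw [hid]
    exact add_mem (Submodule.smul_mem _ _ hAr3) (Submodule.smul_mem _ _ hc1m)
  have hr1 : (s*t)^3*((s*t)^3*(t'*s)) - e1 • ((s*t)^3*((s*t)^3*t')) ∈ U := by
    have h := hUrp _ hFA s hsA
    have hid : (((s*t)^3*((s*t)^3*t')) - e1 • ((s*t)^3*((s*t)^3*(t'*s'))))*s
        = ((s*t)^3*((s*t)^3*(t'*s))) - e1 • ((s*t)^3*((s*t)^3*t')) := by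
      simp only [sub_mul, smul_mul_assoc, mul_assoc, hs's, mul_one]
    rwa [hid] at h
  have hr2 : (s*t)^3*((s*t)^3*(t'*(s*s))) - e1 • ((s*t)^3*((s*t)^3*(t'*s))) ∈ U := by
    have h := hUrp _ hr1 s hsA
    have hid : (((s*t)^3*((s*t)^3*(t'*s))) - e1 • ((s*t)^3*((s*t)^3*t')))*s
        = ((s*t)^3*((s*t)^3*(t'*(s*s)))) - e1 • ((s*t)^3*((s*t)^3*(t'*s))) := by
      simp only [sub_mul, smul_mul_assoc, mul_assoc]
    rwa [hid] at h
  have hr3 : (s*t)^3*((s*t)^3*(t'*(s*(s*s)))) - e1 • ((s*t)^3*((s*t)^3*(t'*(s*s)))) ∈ U := by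
    have h := hUrp _ hr2 s hsA
    have hid : (((s*t)^3*((s*t)^3*(t'*(s*s)))) - e1 • ((s*t)^3*((s*t)^3*(t'*s))))*s
        = ((s*t)^3*((s*t)^3*(t'*(s*(s*s))))) - e1 • ((s*t)^3*((s*t)^3*(t'*(s*s)))) := by
      simp only [sub_mul, smul_mul_assoc, mul_assoc]
    rwa [hid] at h
  have hYlin : (s*t)^3*((s*t)^3*(t'*(s*(s*s))))
      = e1 • ((s*t)^3*((s*t)^3*(t'*(s*s)))) - e2 • ((s*t)^3*((s*t)^3*(t'*s)))
        + e3 • ((s*t)^3*((s*t)^3*t')) := by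
    rw [hs3]
    simp only [mul_sub, mul_add, mul_smul_comm, mul_one]
  have htor : e3 • ((s*t)^3*((s*t)^3*t')) - e2 • ((s*t)^3*((s*t)^3*(t'*s))) ∈ U := by
    have h := hr3
    rw [hYlin] at h
    have hid : e3 • ((s*t)^3*((s*t)^3*t')) - e2 • ((s*t)^3*((s*t)^3*(t'*s)))
        = (e1 • ((s*t)^3*((s*t)^3*(t'*(s*s)))) - e2 • ((s*t)^3*((s*t)^3*(t'*s)))
          + e3 • ((s*t)^3*((s*t)^3*t'))) - e1 • ((s*t)^3*((s*t)^3*(t'*(s*s)))) := by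
      module
    rw [hid]
    exact h
  have hYU : (s*t)^3*((s*t)^3*t') ∈ U := by
    have hc3m : (e3 - e1*e2) • ((s*t)^3*((s*t)^3*t')) ∈ U := by
      have hid : (e3 - e1*e2) • ((s*t)^3*((s*t)^3*t'))
          = (e3 • ((s*t)^3*((s*t)^3*t')) - e2 • ((s*t)^3*((s*t)^3*(t'*s))))
            + e2 • ((s*t)^3*((s*t)^3*(t'*s)) - e1 • ((s*t)^3*((s*t)^3*t'))) := by
        module
      rw [hid]
      exact add_mem htor (Submodule.smul_mem _ _ hr1)
    have h5 : e3 • ((s*t)^3*((s*t)^3*t')) ∈ U := by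
      have hid : e3 • ((s*t)^3*((s*t)^3*t'))
          = (e3 - e1*e2) • ((s*t)^3*((s*t)^3*t')) + e1 • (e2 • ((s*t)^3*((s*t)^3*t'))) := by
        module
      rw [hid]
      exact add_mem hc3m (Submodule.smul_mem _ _ hc2m)
    have h6 := Submodule.smul_mem U v h5
    rwa [smul_smul, hv, one_smul] at h6
  -- z * A t A  is inside U
  have hUztp : ∀ x y : H, x ∈ Algebra.adjoin R {s} → y ∈ Algebra.adjoin R {s} →
      (s*t)^3*(x*(t*y)) ∈ U := by
    intro x y hx hy
    rw [hK2 y, ← mul_assoc, hcomm x hx, mul_assoc,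
      hzs'x (s'*(t'*(s'*(s'*y)))), hzs'x (t'*(s'*(s'*y))),
      hzs'x (s'*((s*t)^3*(t'*(s'*(s'*y))))), hzs'x ((s*t)^3*(t'*(s'*(s'*y))))]
    have hm : (s*t)^3*((s*t)^3*(t'*(s'*(s'*y)))) ∈ U := by
      have h := hUrp _ hYU (s'*(s'*y)) (mul_mem hs'A (mul_mem hs'A hy))
      have hid : ((s*t)^3*((s*t)^3*t'))*(s'*(s'*y))
          = (s*t)^3*((s*t)^3*(t'*(s'*(s'*y)))) := by simp only [mul_assoc]
      rwa [hid] at h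
    exact hUlp x hx _ (hUlp s' hs'A _ (hUlp s' hs'A _ hm))
  have hUwzt : ∀ x y : H, x ∈ Algebra.adjoin R {s} → y ∈ Algebra.adjoin R {s} →
      ∀ w : H, w = (s*t)^3*(x*(t*y)) → w ∈ U := fun x y hx hy w hw => hw ▸ hUztp x y hx hy
  -- decomposition of the subalgebra generated by s
  have hA0s : ∀ c : H, c ∈ Submodule.span R ({1, s, s*s} : Set H) →
      s*c ∈ Submodule.span R ({1, s, s*s} : Set H) := by
    intro c hc
    induction hc using Submodule.span_induction with
    | mem y hy =>
        simp only [Set.mem_insert_iff, Set.mem_singleton_iff] at hy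
        rcases hy with rfl | rfl | rfl
        · rw [mul_one]; exact Submodule.subset_span (by simp)
        · exact Submodule.subset_span (by simp)
        · rw [hs3]
          exact add_mem (sub_mem (Submodule.smul_mem _ _ (Submodule.subset_span (by simp)))
            (Submodule.smul_mem _ _ (Submodule.subset_span (by simp))))
            (Submodule.smul_mem _ _ (Submodule.subset_span (by simp)))
    | zero => rw [mul_zero]; exact zero_mem _
    | add a b _ _ hia hib => rw [mul_add]; exact add_mem hia hib
    | smul r a _ hia => rw [mul_smul_comm]; exact Submodule.smul_mem _ _ hia
  have hA0 : ∀ c : H, c ∈ Algebra.adjoin R {s} → c ∈ Submodule.span R ({1, s, s*s} : Set H) := by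
    have hmul : ∀ x y : H, x ∈ Submodule.span R ({1,s,s*s} : Set H) →
        y ∈ Submodule.span R ({1,s,s*s} : Set H) →
        x*y ∈ Submodule.span R ({1,s,s*s} : Set H) := by
      intro x y hx hy
      induction hx using Submodule.span_induction with
      | mem w hw =>
          simp only [Set.mem_insert_iff, Set.mem_singleton_iff] at hw
          rcases hw with rfl | rfl | rfl
          · rwa [one_mul]
          · exact hA0s y hy
          · rw [mul_assoc]; exact hA0s _ (hA0s y hy)
      | zero => rw [zero_mul]; exact zero_mem _
      | add a b _ _ hia hib => rw [add_mul]; exact add_mem hia hib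
      | smul r a _ hia => rw [smul_mul_assoc]; exact Submodule.smul_mem _ _ hia
    intro c hc
    have hle : Algebra.adjoin R {s} ≤ (Submodule.span R ({1,s,s*s} : Set H)).toSubalgebra
        (Submodule.subset_span (by simp)) hmul := by
      apply Algebra.adjoin_le
      intro y hy
      rcases hy with rfl
      exact Submodule.subset_span (by simp)
    exact hle hc
  -- right multiplication by t preserves U
  have hUmt : ∀ w ∈ U, w*t ∈ U := by
    intro w hw
    rw [hUdef] at hw
    induction hw using Submodule.span_induction with
    | mem y hy =>
        obtain ⟨k, a, b, hy | hy⟩ := hy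
        · subst hy
          have hk : (((s*t)^3)^(k:ℕ) = 1) ∨ (((s*t)^3)^(k:ℕ) = (s*t)^3) := by
            fin_cases k
            · left; simp
            · right; simp
          rcases hk with hk | hk
          · rw [hk, one_mul]
            exact hUwt (a:H) 1 a.2 h1A _ (by rw [mul_one])
          · rw [hk, mul_assoc]
            exact hUwzt (a:H) 1 a.2 h1A _ (by rw [mul_one])
        · subst hy
          have hk : (((s*t)^3)^(k:ℕ) = 1) ∨ (((s*t)^3)^(k:ℕ) = (s*t)^3) := by
            fin_cases k
            · left; simp
            · right; simp
          have hq : t'*(s*(s*t)) = e1 • (s*(t*s')) - e2 • (1:H) + e3 • (s*(t'*s')) := by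
            rw [hs2x t]
            simp only [mul_sub, mul_add, mul_smul_comm]
            rw [haone, ht't, hcvone]
          have key : ∀ c : H, c ∈ Submodule.span R ({1,s,s*s} : Set H) →
              ((((s*t)^3)^(k:ℕ) * (a:H) * t') * c) * t ∈ U := by
            intro c hc
            induction hc using Submodule.span_induction with
            | mem d hd =>
                simp only [Set.mem_insert_iff, Set.mem_singleton_iff] at hd
                rcases hd with rfl | hd | rfl
                · rw [mul_one, mul_assoc, ht't, mul_one]
                  rcases hk with hk | hk
                  · rw [hk, one_mul]; exact hU0p _ a.2
                  · rw [hk]; exact hU1p _ a.2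
                · rw [hd]
                  have heq : ((((s*t)^3)^(k:ℕ) * (a:H) * t') * s) * t
                      = ((s*t)^3)^(k:ℕ) * ((a:H)*(t'*(s*t))) := by simp only [mul_assoc]
                  rw [heq, haone]
                  rcases hk with hk | hk
                  · rw [hk, one_mul]
                    exact hUwt ((a:H)*s) s' (mul_mem a.2 hsA) hs'A _ (by simp only [mul_assoc])
                  · rw [hk]
                    exact hUwzt ((a:H)*s) s' (mul_mem a.2 hsA) hs'A _ (by simp only [mul_assoc])
                · have heq : ((((s*t)^3)^(k:ℕ) * (a:H) * t') * (s*s)) * t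
                      = ((s*t)^3)^(k:ℕ) * ((a:H)*(t'*(s*(s*t)))) := by simp only [mul_assoc]
                  rw [heq, hq]
                  simp only [mul_sub, mul_add, mul_smul_comm, mul_one]
                  rcases hk with hk | hk
                  · rw [hk]
                    simp only [one_mul]
                    refine add_mem (sub_mem (Submodule.smul_mem _ _ ?_)
                      (Submodule.smul_mem _ _ (hU0p _ a.2))) (Submodule.smul_mem _ _ ?_)
                    · exact hUwt ((a:H)*s) s' (mul_mem a.2 hsA) hs'A _ (by simp only [mul_assoc])
                    · exact hUwt' ((a:H)*s) s' (mul_mem a.2 hsA) hs'A _ (by simp only [mul_assoc])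
                  · rw [hk]
                    refine add_mem (sub_mem (Submodule.smul_mem _ _ ?_)
                      (Submodule.smul_mem _ _ (hU1p _ a.2))) (Submodule.smul_mem _ _ ?_)
                    · exact hUwzt ((a:H)*s) s' (mul_mem a.2 hsA) hs'A _ (by simp only [mul_assoc])
                    · exact hUwzt' ((a:H)*s) s' (mul_mem a.2 hsA) hs'A _ (by simp only [mul_assoc])
            | zero =>
                rw [mul_zero, zero_mul]; exact zero_mem _
            | add a' b' _ _ hia hib =>
                rw [mul_add, add_mul]; exact add_mem hia hib
            | smul r a' _ hia =>
                rw [mul_smul_comm, smul_mul_assoc]; exact Submodule.smul_mem _ _ hia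
          exact key (b:H) (hA0 (b:H) b.2)
    | zero => rw [zero_mul]; exact zero_mem _
    | add a b _ _ hia hib => rw [add_mul]; exact add_mem hia hib
    | smul r a _ hia => rw [smul_mul_assoc]; exact Submodule.smul_mem _ _ hia
  constructor
  · -- U = ⊤
    rw [eq_top_iff]
    intro x _
    have hx : x ∈ Algebra.adjoin R {s, t} := by rw [hgen]; exact Algebra.mem_top
    have hx' : x ∈ Submodule.span R ((Submonoid.closure ({s, t} : Set H) : Submonoid H) : Set H) := by
      rw [← Algebra.adjoin_eq_span]
      exact hx
    have hmono : ∀ y ∈ Submonoid.closure ({s, t} : Set H), ∀ w ∈ U, w*y ∈ U := by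
      intro y hy
      induction hy using Submonoid.closure_induction with
      | mem d hd =>
          simp only [Set.mem_insert_iff, Set.mem_singleton_iff] at hd
          rcases hd with hd | hd
          · intro w hw; rw [hd]; exact hUrp w hw s hsA
          · intro w hw; rw [hd]; exact hUmt w hw
      | one => intro w hw; rwa [mul_one]
      | mul d e _ _ hid hie =>
          intro w hw
          rw [← mul_assoc]
          exact hie _ (hid w hw)
    have hsub : ((Submonoid.closure ({s, t} : Set H) : Submonoid H) : Set H) ⊆ (U : Set H) := by
      intro y hy
      have h := hmono y hy 1 h1U
      rwa [one_mul] at h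
    exact Submodule.span_le.mpr hsub hx'
  · -- t is in the second span
    apply Submodule.subset_span
    refine Or.inl ⟨⟨s'*s', mul_mem hs'A hs'A⟩, ⟨s'*s', mul_mem hs'A hs'A⟩, ?_⟩
    show t = (s*t)^3 * (s'*s') * t' * (s'*s')
    have h := hK2 1
    simp only [mul_one] at h
    conv_lhs => rw [h]
    simp only [mul_assoc]
end
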